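/- arXiv:1404.6572 — 2 statements merged into one kernel-verified Lean document; each statement's English description precedes it below -/
import Mathlib

section
/- Let X = (X_1,...,X_N) be an exchangeable vector of {0,1}-valued random variables and γ = X_1 + ... + X_N. Then γ has a Binomial(N, π) distribution for some π ∈ [0,1] if and only if X_1,...,X_N are jointly independent. -/
/-!
An exchangeable law on `{0,1}^N` is constant on each level set `{cnt = k}`, which has
`C(N,k)` points. So `γ ~ Binomial(N,π)` forces `P(x) = π^cnt x (1-π)^(N - cnt x)`, the product
of `Bernoulli(π)` laws, whose one-dimensional marginals are `Bernoulli(π)`. Conversely,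
exchangeability makes all one-dimensional marginals the same `Bernoulli(π)`, and independence
turns `P` into that same product, whose level sets carry the binomial weights.
-/

open Finset

/-- number of 1's (trues) in a 0-1 vector -/
def cnt {n : ℕ} (x : Fin n → Bool) : ℕ := (Finset.univ.filter fun i => x i = true).card

/-- P(γ = k): probability that the total count of 1's equals k -/
def gam (N : ℕ) (p : (Fin N → Bool) → ℝ) (k : ℕ) : ℝ :=
  ∑ y : Fin N → Bool, if cnt y = k then p y else 0

/-- P(X_1 = x_1, ..., X_n = x_n): probability of observing the prefix x -/
def pref (N : ℕ) (p : (Fin N → Bool) → ℝ) {n : ℕ} (hn : n ≤ N) (x : Fin n → Bool) : ℝ :=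
  ∑ y : Fin N → Bool, if (∀ i : Fin n, y (Fin.castLE hn i) = x i) then p y else 0

section Marginal

variable {ι α : Type*} [Fintype ι] [DecidableEq ι] [Fintype α] [DecidableEq α]

def marginal (p : (ι → α) → ℝ) (i : ι) (a : α) : ℝ :=
  ∑ y : ι → α, if y i = a then p y else 0

theorem sum_marginal (p : (ι → α) → ℝ) (i : ι) : ∑ a, marginal p i a = ∑ y, p y := by
  simp only [marginal]
  rw [Finset.sum_comm]
  simp

theorem marginal_nonneg {p : (ι → α) → ℝ} (hp : ∀ y, 0 ≤ p y) (i : ι) (a : α) :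
    0 ≤ marginal p i a :=
  sum_nonneg fun y _ => by split_ifs <;> simp [hp]

theorem marginal_le_sum {p : (ι → α) → ℝ} (hp : ∀ y, 0 ≤ p y) (i : ι) (a : α) :
    marginal p i a ≤ ∑ y, p y :=
  sum_marginal p i ▸ single_le_sum (fun b _ => marginal_nonneg hp i b) (mem_univ a)

theorem marginal_eq_of_exchangeable {p : (ι → α) → ℝ}
    (hp : ∀ σ : Equiv.Perm ι, ∀ y, p (y ∘ σ) = p y) (i j : ι) (a : α) :
    marginal p i a = marginal p j a := by
  refine Fintype.sum_equiv (Equiv.arrowCongr (Equiv.swap i j) (Equiv.refl α)) _ _ fun y => ?_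
  have hy : Equiv.arrowCongr (Equiv.swap i j) (Equiv.refl α) y = y ∘ Equiv.swap i j := by
    ext; simp [Equiv.arrowCongr_apply, Equiv.symm_swap]
  simp [hy, hp]

theorem marginal_prod (f : α → ℝ) (hf : ∑ a, f a = 1) (i : ι) (a : α) :
    marginal (fun y => ∏ j, f (y j)) i a = f a := by
  -- absorb the indicator of `y i = a` into the `i`-th factor, so that the sum factorizes
  set g : ι → α → ℝ := fun j b => if j = i ∧ b ≠ a then 0 else f b
  have hg : ∀ y : ι → α, (if y i = a then ∏ j, f (y j) else 0) = ∏ j, g j (y j) := by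
    intro y
    split_ifs with h
    · exact prod_congr rfl fun j _ => by simp only [g]; grind
    · exact (prod_eq_zero (mem_univ i) (by simp [g, h])).symm
  have hg_sum : ∀ j, ∑ b, g j b = if j = i then f a else 1 := by
    intro j
    split_ifs with hj
    · simp [g, hj]
    · simp [g, hj, hf]
  calc marginal (fun y => ∏ j, f (y j)) i a = ∑ y : ι → α, ∏ j, g j (y j) :=
        sum_congr rfl fun y _ => hg y
    _ = ∏ j, ∑ b, g j b := (Fintype.prod_sum g).symm
    _ = f a := by simp [hg_sum]

end Marginal

def bernoulliWeight (π : ℝ) (b : Bool) : ℝ := if b then π else 1 - π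

theorem sum_bernoulliWeight (π : ℝ) : ∑ b, bernoulliWeight π b = 1 := by
  simp [bernoulliWeight]

section Count

variable {N : ℕ}

theorem cnt_le (x : Fin N → Bool) : cnt x ≤ N := by
  simpa [cnt] using card_filter_le univ fun i => x i = true

theorem prod_bernoulliWeight (π : ℝ) (x : Fin N → Bool) :
    ∏ i, bernoulliWeight π (x i) = π ^ cnt x * (1 - π) ^ (N - cnt x) := by
  have hcompl := card_filter_add_card_filter_not (s := univ) fun i => x i = true
  simp only [card_univ, Fintype.card_fin] at hcompl
  simp only [bernoulliWeight, prod_ite, prod_const, cnt]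
  congr 2
  omega

theorem exists_perm_comp_eq_of_cnt_eq {x y : Fin N → Bool} (h : cnt x = cnt y) :
    ∃ σ : Equiv.Perm (Fin N), x ∘ σ = y := by
  obtain ⟨σ, hσ⟩ := Equiv.Perm.exists_map_finset_eq
    (univ.filter fun i => y i = true) (univ.filter fun i => x i = true) h.symm
  refine ⟨σ, funext fun i => Bool.eq_iff_iff.2 ?_⟩
  simpa using (congrArg (σ i ∈ ·) hσ).symm

theorem card_filter_cnt_eq (k : ℕ) : #{y : Fin N → Bool | cnt y = k} = N.choose k := by
  calc #{y : Fin N → Bool | cnt y = k} = #(powersetCard k (univ : Finset (Fin N))) := by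
        refine card_nbij' (fun y => ({i | y i = true} : Finset (Fin N)))
          (fun s i => decide (i ∈ s)) (fun y hy => by simpa [cnt] using (mem_filter.1 hy).2)
          (fun s hs => mem_filter.2 ⟨mem_univ _, by simpa [cnt] using hs⟩)
          (fun y _ => by ext; simp) (fun s _ => by ext; simp)
    _ = N.choose k := by simp

end Count

section Exchangeable

variable {N : ℕ} {p : (Fin N → Bool) → ℝ}

theorem eq_of_cnt_eq (hexch : ∀ σ : Equiv.Perm (Fin N), ∀ y, p (y ∘ σ) = p y)
    {x y : Fin N → Bool} (h : cnt x = cnt y) : p x = p y := by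
  obtain ⟨σ, rfl⟩ := exists_perm_comp_eq_of_cnt_eq h
  exact (hexch σ x).symm

theorem gam_eq_choose_mul {k : ℕ} {c : ℝ} (hc : ∀ y, cnt y = k → p y = c) :
    gam N p k = N.choose k * c := by
  rw [gam, ← sum_filter, sum_congr rfl fun y hy => hc y (mem_filter.1 hy).2, sum_const,
    card_filter_cnt_eq, nsmul_eq_mul]

theorem eq_prod_bernoulliWeight_of_gam
    (hexch : ∀ σ : Equiv.Perm (Fin N), ∀ y, p (y ∘ σ) = p y) {π : ℝ} (hbin : ∀ k ≤ N, gam N p k = N.choose k * π ^ k * (1 - π) ^ (N - k))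
    (y : Fin N → Bool) : p y = ∏ i, bernoulliWeight π (y i) := by
  have hchoose : (N.choose (cnt y) : ℝ) ≠ 0 := by
    exact_mod_cast (Nat.choose_pos (cnt_le y)).ne'
  have hgam := gam_eq_choose_mul (c := p y) fun x hx => eq_of_cnt_eq hexch hx
  rw [hbin _ (cnt_le y), mul_assoc] at hgam
  rw [prod_bernoulliWeight, mul_left_cancel₀ hchoose hgam]

theorem exists_marginal_eq_bernoulliWeight (hnn : ∀ y, 0 ≤ p y) (hsum : ∑ y, p y = 1)
    (hexch : ∀ σ : Equiv.Perm (Fin N), ∀ y, p (y ∘ σ) = p y) :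
    ∃ π ∈ Set.Icc (0 : ℝ) 1, ∀ i b, marginal p i b = bernoulliWeight π b := by
  rcases isEmpty_or_nonempty (Fin N) with _ | ⟨⟨i₀⟩⟩
  · exact ⟨0, by simp, fun i => isEmptyElim i⟩
  refine ⟨marginal p i₀ true, ⟨marginal_nonneg hnn _ _, hsum ▸ marginal_le_sum hnn _ _⟩,
    fun i b => ?_⟩
  have htotal := sum_marginal p i₀
  rw [Fintype.sum_bool, hsum] at htotal
  rw [marginal_eq_of_exchangeable hexch i i₀]
  cases b
  · simp only [bernoulliWeight, Bool.false_eq_true, if_false]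
    linarith
  · rfl

end Exchangeable

/-- For an exchangeable 0-1 vector, γ is Binomial(N,π) for some π ∈ [0,1]
iff the coordinates are jointly independent. -/
theorem binomial_iff_independent (N : ℕ) (p : (Fin N → Bool) → ℝ)
    (hnn : ∀ y, 0 ≤ p y) (hsum : ∑ y, p y = 1)
    (hexch : ∀ σ : Equiv.Perm (Fin N), ∀ y : Fin N → Bool, p (y ∘ σ) = p y) :
    (∃ π : ℝ, π ∈ Set.Icc (0:ℝ) 1 ∧
      ∀ k ≤ N, gam N p k = (N.choose k : ℝ) * π ^ k * (1 - π) ^ (N - k)) ↔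
    (∀ x : Fin N → Bool,
      p x = ∏ i, ∑ y : Fin N → Bool, if y i = x i then p y else 0) := by
  change _ ↔ ∀ x, p x = ∏ i, marginal p i (x i)
  constructor
  · rintro ⟨π, -, hbin⟩ x
    have hprod : p = fun y => ∏ i, bernoulliWeight π (y i) :=
      funext (eq_prod_bernoulliWeight_of_gam hexch hbin)
    simp only [hprod, marginal_prod _ (sum_bernoulliWeight π)]
  · intro hind
    obtain ⟨π, hπ, hmarg⟩ := exists_marginal_eq_bernoulliWeight hnn hsum hexch
    refine ⟨π, hπ, fun k _ => ?_⟩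
    rw [mul_assoc]
    refine gam_eq_choose_mul fun y hy => ?_
    rw [hind y, ← hy, ← prod_bernoulliWeight]
    simp only [hmarg]
end

section
/- For integers N, M ≥ 1 and N ≤ a ≤ M, the Hypergeometric(N+M, a, N) distribution is 2nd-order tighter than the Binomial: if P(γ=i) = C(a,i)C(N+M-a, N-i)/C(N+M, N), then P(γ=i)^2/(P(γ=i+1)P(γ=i-1)) > (i+1)(N-i+1)/(i(N-i)) for all i with all three probabilities positive, 1 ≤ i ≤ N-1. -/
/-! With `b = N + M - a`, the hypergeometric weight `P i ∝ C(a, i) C(b, N - i)` is a product of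
two binomial sequences, one in `i` and one in `N - i`. For binomial coefficients the second-order
ratio is exact:
`C(n, k)² k (n - k) = C(n, k - 1) C(n, k + 1) (k + 1) (n - k + 1)`. Multiplying the two identities,
the hypergeometric ratio equals the binomial bound `(i + 1)(N - i + 1) / (i (N - i))` times
`(a - i + 1)(b - N + i + 1) / ((a - i)(b - N + i))`, and this last factor exceeds `1`. -/

theorem Nat.choose_succ_sq_mul (n j : ℕ) :
    n.choose (j + 1) ^ 2 * ((j + 1) * (n - (j + 1))) =
      n.choose j * n.choose (j + 2) * ((j + 2) * (n - j)) := by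
  have lower := Nat.choose_succ_right_eq n j
  have upper := Nat.choose_succ_right_eq n (j + 1)
  calc n.choose (j + 1) ^ 2 * ((j + 1) * (n - (j + 1)))
      = (n.choose (j + 1) * (j + 1)) * (n.choose (j + 1) * (n - (j + 1))) := by ring
    _ = (n.choose j * (n - j)) * (n.choose (j + 2) * (j + 2)) := by rw [lower, ← upper]
    _ = n.choose j * n.choose (j + 2) * ((j + 2) * (n - j)) := by ring

theorem Nat.choose_mul_choose_second_order_lt (a b j l : ℕ) (ha : j + 2 ≤ a) (hb : l + 2 ≤ b) :
    (j + 2) * (l + 2) * (a.choose (j + 2) * b.choose l * (a.choose j * b.choose (l + 2))) <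
      (a.choose (j + 1) * b.choose (l + 1)) ^ 2 * ((j + 1) * (l + 1)) := by
  have hchoose : 0 < a.choose (j + 2) * b.choose l * (a.choose j * b.choose (l + 2)) :=
    Nat.mul_pos (Nat.mul_pos (Nat.choose_pos ha) (Nat.choose_pos (by omega)))
      (Nat.mul_pos (Nat.choose_pos (by omega)) (Nat.choose_pos hb))
  have hpos := Nat.mul_pos (Nat.mul_pos (j + 1).succ_pos (l + 1).succ_pos) hchoose
  have product :
      (a.choose (j + 1) * b.choose (l + 1)) ^ 2 * ((j + 1) * (l + 1)) *
          ((a - (j + 1)) * (b - (l + 1))) =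
        (j + 2) * (l + 2) * (a.choose (j + 2) * b.choose l * (a.choose j * b.choose (l + 2))) *
          ((a - j) * (b - l)) := by
    calc _ = (a.choose (j + 1) ^ 2 * ((j + 1) * (a - (j + 1)))) *
          (b.choose (l + 1) ^ 2 * ((l + 1) * (b - (l + 1)))) := by ring
      _ = _ := by rw [Nat.choose_succ_sq_mul a j, Nat.choose_succ_sq_mul b l]; ring
  have hlt : (a - (j + 1)) * (b - (l + 1)) < (a - j) * (b - l) :=
    Nat.mul_lt_mul'' (by omega) (by omega)
  exact lt_of_mul_lt_mul_right (product ▸ Nat.mul_lt_mul_of_pos_left hlt hpos) (Nat.zero_le _)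

theorem hypergeometric_second_order_tighter_general (N M a : ℕ)
    (haN : N ≤ a) (haM : a ≤ M) (P : ℕ → ℝ)
    (hP : ∀ i ≤ N, P i =
      (a.choose i : ℝ) * ((N + M - a).choose (N - i) : ℝ) / ((N + M).choose N : ℝ)) :
    ∀ i : ℕ, 1 ≤ i → i ≤ N - 1 →
      0 < P (i - 1) → 0 < P i → 0 < P (i + 1) →
      P i ^ 2 / (P (i + 1) * P (i - 1)) >
        (((i + 1) * (N - i + 1) : ℕ) : ℝ) / ((i * (N - i) : ℕ) : ℝ) := by
  intro i hi1 hi2 hprev _ hnext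
  have hden : (0 : ℝ) < ((i * (N - i) : ℕ) : ℝ) := by
    exact_mod_cast Nat.mul_pos (by omega) (by omega)
  rw [gt_iff_lt, div_lt_div_iff₀ hden (mul_pos hnext hprev)]
  obtain ⟨j, rfl⟩ : ∃ j, i = j + 1 := ⟨i - 1, by omega⟩
  obtain ⟨l, hl⟩ : ∃ l, N - (j + 1) = l + 1 := ⟨N - j - 2, by omega⟩
  have hD : (0 : ℝ) < (N + M).choose N := by exact_mod_cast Nat.choose_pos (by omega)
  rw [hP _ (by omega), hP _ (by omega), hP _ (by omega), show N - (j + 1 + 1) = l by omega,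
    show N - (j + 1 - 1) = l + 2 by omega, hl, Nat.add_sub_cancel]
  have key := (Nat.cast_lt (α := ℝ)).2 <|
    Nat.choose_mul_choose_second_order_lt a (N + M - a) j l (by omega) (by omega)
  push_cast at key ⊢
  field_simp
  linarith

/-- the Hypergeometric(N+M, a, N) distribution is 2nd-order tighter than
the Binomial. -/
theorem hypergeometric_second_order_tighter (N M a : ℕ)
    (hN : 1 ≤ N) (hM : 1 ≤ M) (haN : N ≤ a) (haM : a ≤ M) (P : ℕ → ℝ)
    (hP : ∀ i ≤ N, P i =
      (a.choose i : ℝ) * ((N + M - a).choose (N - i) : ℝ) / ((N + M).choose N : ℝ)) :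
    ∀ i : ℕ, 1 ≤ i → i ≤ N - 1 →
      0 < P (i - 1) → 0 < P i → 0 < P (i + 1) →
      P i ^ 2 / (P (i + 1) * P (i - 1)) >
        (((i + 1) * (N - i + 1) : ℕ) : ℝ) / ((i * (N - i) : ℕ) : ℝ) :=
  hypergeometric_second_order_tighter_general N M a haN haM P hP
end
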